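/- Let F and G be disjoint finite sets of integers and let u' : ℝ → F → ℂ be a differentiable solution of the t-model equations for the Fourier-truncated 1D critical focusing NLS (as in the mass dissipation identity: for every k ∈ F, d u'_k/dt = −i k² u'_k + i Σ_{k₁−k₂+k₃−k₄+k₅=k, all kᵢ∈F} u'_{k₁} conj(u'_{k₂}) u'_{k₃} conj(u'_{k₄}) u'_{k₅} + t·[ 3i Σ_{k₁∈G, k₂,…,k₅∈F, k₁−k₂+k₃−k₄+k₅=k} R_{k₁}(u') conj(u'_{k₂}) u'_{k₃} conj(u'_{k₄}) u'_{k₅} + 2i Σ_{k₂∈G, k₁,k₃,k₄,k₅∈F, k₁−k₂+k₃−k₄+k₅=k} u'_{k₁} conj(R_{k₂}(u')) u'_{k₃} conj(u'_{k₄}) u'_{k₅} ], where for m ∈ G, R_m(v) = i Σ_{k₁−k₂+k₃−k₄+k₅=m, all kᵢ∈F} v_{k₁} conj(v_{k₂}) v_{k₃} conj(v_{k₄}) v_{k₅}). Then the resolved mass M_F(t) = Σ_{k∈F} |u'_k(t)|² is non-increasing on [0, ∞): for all 0 ≤ t₁ ≤ t₂, M_F(t₂) ≤ M_F(t₁). 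-/

import Mathlib

open Finset

/-- The set of 5-tuples `(k₁,k₂,k₃,k₄,k₅) ∈ A × B × C × D × E` with
`k₁ - k₂ + k₃ - k₄ + k₅ = k`. -/
def mixedQuintuples (A B C D E : Finset ℤ) (k : ℤ) : Finset (ℤ × ℤ × ℤ × ℤ × ℤ) :=
  (A ×ˢ B ×ˢ C ×ˢ D ×ˢ E).filter
    (fun p => p.1 - p.2.1 + p.2.2.1 - p.2.2.2.1 + p.2.2.2.2 = k)

/-- The truncated right-hand side of the Fourier-Galerkin 1D critical focusing NLS:
`R_m(v) = -i m² v_m · 1_{m ∈ F} + i Σ_{k₁-k₂+k₃-k₄+k₅ = m, kᵢ ∈ F}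
v_{k₁} conj(v_{k₂}) v_{k₃} conj(v_{k₄}) v_{k₅}`. -/
noncomputable def truncRHS (F : Finset ℤ) (v : ℤ → ℂ) (m : ℤ) : ℂ :=
  (if m ∈ F then -Complex.I * (m : ℂ) ^ 2 * v m else 0)
    + Complex.I * ∑ p ∈ mixedQuintuples F F F F F m,
        v p.1 * (starRingEnd ℂ) (v p.2.1) * v p.2.2.1
          * (starRingEnd ℂ) (v p.2.2.2.1) * v p.2.2.2.2

/-- The right-hand side of the `t`-model equation for a resolved mode `k ∈ F`. -/
noncomputable def tModelRHS (F G : Finset ℤ) (v : ℤ → ℂ) (t : ℝ) (k : ℤ) : ℂ :=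
  -Complex.I * (k : ℂ) ^ 2 * v k
    + Complex.I * ∑ p ∈ mixedQuintuples F F F F F k,
        v p.1 * (starRingEnd ℂ) (v p.2.1) * v p.2.2.1
          * (starRingEnd ℂ) (v p.2.2.2.1) * v p.2.2.2.2
    + (t : ℂ) *
      (3 * Complex.I * ∑ p ∈ mixedQuintuples G F F F F k,
          truncRHS F v p.1 * (starRingEnd ℂ) (v p.2.1) * v p.2.2.1
            * (starRingEnd ℂ) (v p.2.2.2.1) * v p.2.2.2.2
        + 2 * Complex.I * ∑ p ∈ mixedQuintuples F G F F F k,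
            v p.1 * (starRingEnd ℂ) (truncRHS F v p.2.1) * v p.2.2.1
              * (starRingEnd ℂ) (v p.2.2.2.1) * v p.2.2.2.2)

/-!
Differentiating, `dM_F/dt = 2 Re Σ_{k ∈ F} conj(u'_k) du'_k/dt`. The Hamiltonian part contributes
nothing: `-i k² |u'_k|²` is imaginary, and with `S_m = quinticSum F u' m` the pairing
`Σ_k conj(u'_k) S_k` is real by a relabelling of the resonant sextuples. In the two memory
terms, relabelling so that the unresolved mode `m ∈ G` becomes the outer index turns them into
`Σ_m R_m conj(S_m)` and `Σ_m conj(R_m) S_m`, where `R_m = i S_m` because `m ∉ F`.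
Hence the memory term equals `t (3i · i + 2i · (-i)) Σ_m |R_m|² = -t Σ_m |R_m|²`, so
`dM_F/dt = -2t Σ_{m ∈ G} |R_m|² ≤ 0`.
-/

open ComplexConjugate

lemma sum_sum_mixedQuintuples {M : Type*} [AddCommMonoid M] (K A B C D E : Finset ℤ)
    (g : ℤ → ℤ × ℤ × ℤ × ℤ × ℤ → M) :
    ∑ k ∈ K, ∑ p ∈ mixedQuintuples A B C D E k, g k p
      = ∑ q ∈ (K ×ˢ A ×ˢ B ×ˢ C ×ˢ D ×ˢ E).filter
          (fun q => q.2.1 - q.2.2.1 + q.2.2.2.1 - q.2.2.2.2.1 + q.2.2.2.2.2 = q.1), g q.1 q.2 := by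
  rw [sum_filter, sum_product]
  exact sum_congr rfl fun k _ => sum_filter _ _

noncomputable def quinticTerm (v : ℤ → ℂ) (p : ℤ × ℤ × ℤ × ℤ × ℤ) : ℂ :=
  v p.1 * conj (v p.2.1) * v p.2.2.1 * conj (v p.2.2.2.1) * v p.2.2.2.2

noncomputable def quinticSum (F : Finset ℤ) (v : ℤ → ℂ) (m : ℤ) : ℂ :=
  ∑ p ∈ mixedQuintuples F F F F F m, quinticTerm v p

lemma truncRHS_of_notMem {F : Finset ℤ} {m : ℤ} (hm : m ∉ F) (v : ℤ → ℂ) :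
    truncRHS F v m = Complex.I * quinticSum F v m := by
  simp [truncRHS, quinticSum, quinticTerm, hm]

/-- The relabelling `(k, k₁, k₂, k₃, k₄, k₅) ↦ (k₅, k₂, k₁, k₄, k₃, k)` conjugates each summand. -/
lemma im_sum_conj_mul_quinticSum (F : Finset ℤ) (v : ℤ → ℂ) :
    (∑ k ∈ F, conj (v k) * quinticSum F v k).im = 0 := by
  refine Complex.conj_eq_iff_im.mp ?_
  simp only [quinticSum, mul_sum]
  rw [sum_sum_mixedQuintuples, map_sum]
  refine sum_nbij' (fun q => (q.2.2.2.2.2, q.2.2.1, q.2.1, q.2.2.2.2.1, q.2.2.2.1, q.1))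
    (fun q => (q.2.2.2.2.2, q.2.2.1, q.2.1, q.2.2.2.2.1, q.2.2.2.1, q.1))
    (fun _ _ => by grind) (fun _ _ => by grind) (fun _ _ => rfl) (fun _ _ => rfl) fun _ _ => ?_
  simp only [quinticTerm, map_mul, Complex.conj_conj]
  ring

lemma sum_conj_mul_sum_mixedQuintuples_fst (F G : Finset ℤ) (v R : ℤ → ℂ) :
    ∑ k ∈ F, conj (v k) * ∑ p ∈ mixedQuintuples G F F F F k,
        R p.1 * conj (v p.2.1) * v p.2.2.1 * conj (v p.2.2.2.1) * v p.2.2.2.2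
      = ∑ m ∈ G, R m * conj (quinticSum F v m) := by
  simp only [quinticSum, map_sum, mul_sum]
  rw [sum_sum_mixedQuintuples, sum_sum_mixedQuintuples]
  refine sum_nbij' (fun q => (q.2.1, q.2.2.1, q.2.2.2.1, q.2.2.2.2.1, q.2.2.2.2.2, q.1))
    (fun q => (q.2.2.2.2.2, q.1, q.2.1, q.2.2.1, q.2.2.2.1, q.2.2.2.2.1))
    (fun _ _ => by grind) (fun _ _ => by grind) (fun _ _ => rfl) (fun _ _ => rfl) fun _ _ => ?_
  simp only [quinticTerm, map_mul, Complex.conj_conj]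
  ring

lemma sum_conj_mul_sum_mixedQuintuples_snd (F G : Finset ℤ) (v R : ℤ → ℂ) :
    ∑ k ∈ F, conj (v k) * ∑ p ∈ mixedQuintuples F G F F F k,
        v p.1 * conj (R p.2.1) * v p.2.2.1 * conj (v p.2.2.2.1) * v p.2.2.2.2
      = ∑ m ∈ G, conj (R m) * quinticSum F v m := by
  simp only [quinticSum, mul_sum]
  rw [sum_sum_mixedQuintuples, sum_sum_mixedQuintuples]
  refine sum_nbij' (fun q => (q.2.2.1, q.2.1, q.2.2.2.2.1, q.2.2.2.1, q.1, q.2.2.2.2.2))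
    (fun q => (q.2.2.2.2.1, q.2.1, q.1, q.2.2.2.1, q.2.2.1, q.2.2.2.2.2))
    (fun _ _ => by grind) (fun _ _ => by grind) (fun _ _ => rfl) (fun _ _ => rfl) fun _ _ => ?_
  simp only [quinticTerm]
  ring

lemma re_sum_conj_mul_tModelRHS {F G : Finset ℤ} (hdisj : Disjoint F G) (v : ℤ → ℂ) (t : ℝ) :
    (∑ k ∈ F, conj (v k) * tModelRHS F G v t k).re
      = -t * ∑ m ∈ G, ‖truncRHS F v m‖ ^ 2 := by
  set N : ℝ := ∑ m ∈ G, ‖truncRHS F v m‖ ^ 2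
  have hR : ∀ m ∈ G, truncRHS F v m = Complex.I * quinticSum F v m := fun m hm =>
    truncRHS_of_notMem (disjoint_right.mp hdisj hm) v
  have hnorm : ∀ m ∈ G, (‖truncRHS F v m‖ ^ 2 : ℂ) = Complex.normSq (quinticSum F v m) := by
    intro m hm
    rw [hR m hm, norm_mul, Complex.norm_I, one_mul, Complex.normSq_eq_norm_sq]
    norm_cast
  have hfst : ∑ m ∈ G, truncRHS F v m * conj (quinticSum F v m) = Complex.I * N := by
    push_cast [N, mul_sum]
    refine sum_congr rfl fun m hm => ?_
    rw [hnorm m hm, hR m hm, mul_assoc, Complex.mul_conj]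
  have hsnd : ∑ m ∈ G, conj (truncRHS F v m) * quinticSum F v m = -Complex.I * N := by
    push_cast [N, mul_sum]
    refine sum_congr rfl fun m hm => ?_
    rw [hnorm m hm, hR m hm, map_mul, Complex.conj_I, mul_assoc, mul_comm (conj _),
      Complex.mul_conj]
  have hlin : (∑ k ∈ F, conj (v k) * (-Complex.I * (k : ℂ) ^ 2 * v k)).re = 0 := by
    rw [Complex.re_sum]
    refine sum_eq_zero fun k _ => ?_
    rw [mul_comm, mul_assoc, Complex.mul_conj]
    simp [sq]
  have hexpand : ∑ k ∈ F, conj (v k) * tModelRHS F G v t k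
      = ∑ k ∈ F, conj (v k) * (-Complex.I * (k : ℂ) ^ 2 * v k)
        + Complex.I * ∑ k ∈ F, conj (v k) * quinticSum F v k
        + t * (3 * Complex.I * ∑ m ∈ G, truncRHS F v m * conj (quinticSum F v m)
          + 2 * Complex.I * ∑ m ∈ G, conj (truncRHS F v m) * quinticSum F v m) := by
    rw [← sum_conj_mul_sum_mixedQuintuples_fst F G v, ← sum_conj_mul_sum_mixedQuintuples_snd F G v,
      mul_sum, mul_sum, mul_sum, ← sum_add_distrib, ← sum_add_distrib, mul_sum, ← sum_add_distrib]
    refine sum_congr rfl fun k _ => ?_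
    simp only [tModelRHS, quinticSum, quinticTerm]
    ring
  rw [hexpand, hfst, hsnd, Complex.add_re, Complex.add_re, hlin, Complex.I_mul_re,
    im_sum_conj_mul_quinticSum, Complex.re_ofReal_mul,
    show 3 * Complex.I * (Complex.I * N) + 2 * Complex.I * (-Complex.I * N) = -(N : ℂ) by
      linear_combination (N : ℂ) * Complex.I_mul_I]
  simp

lemma hasDerivAt_sum_norm_sq_of_tModel {F G : Finset ℤ} (hdisj : Disjoint F G)
    {u' : ℝ → ℤ → ℂ} {t : ℝ}
    (hode : ∀ k ∈ F, HasDerivAt (fun s => u' s k) (tModelRHS F G (u' t) t k) t) :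
    HasDerivAt (fun s => ∑ k ∈ F, ‖u' s k‖ ^ 2)
      (-2 * t * ∑ m ∈ G, ‖truncRHS F (u' t) m‖ ^ 2) t := by
  refine (HasDerivAt.fun_sum fun k hk => (hode k hk).norm_sq).congr_deriv ?_
  simp only [Complex.inner, ← mul_sum, ← Complex.re_sum, mul_comm (tModelRHS _ _ _ _ _)]
  rw [re_sum_conj_mul_tModelRHS hdisj]
  ring

/-- The resolved mass `M_F(t) = Σ_{k ∈ F} |u'_k(t)|²` of a solution of the `t`-model
for the Fourier-truncated 1D critical focusing NLS is non-increasing on `[0, ∞)`. -/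
theorem tmodel_mass_nonincreasing
    (F G : Finset ℤ) (hdisj : Disjoint F G) (u' : ℝ → ℤ → ℂ)
    (hode : ∀ k ∈ F, ∀ t : ℝ,
      HasDerivAt (fun s => u' s k) (tModelRHS F G (u' t) t k) t) :
    ∀ t₁ t₂ : ℝ, 0 ≤ t₁ → t₁ ≤ t₂ →
      (∑ k ∈ F, ‖u' t₂ k‖ ^ 2) ≤ ∑ k ∈ F, ‖u' t₁ k‖ ^ 2 := by
  intro t₁ t₂ h₁ h₁₂
  have hM (t : ℝ) := hasDerivAt_sum_norm_sq_of_tModel hdisj fun k hk => hode k hk t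
  refine antitoneOn_of_hasDerivWithinAt_nonpos (convex_Ici 0)
    (fun t _ => (hM t).continuousAt.continuousWithinAt) (fun t _ => (hM t).hasDerivWithinAt)
    (fun t ht => ?_) h₁ (h₁.trans h₁₂) h₁₂
  rw [interior_Ici, Set.mem_Ioi] at ht
  exact mul_nonpos_of_nonpos_of_nonneg (by linarith) (sum_nonneg fun _ _ => sq_nonneg _)
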